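/- arXiv:quant-ph/0405149 — 4 statements merged into one kernel-verified Lean document; each statement's English description precedes it below -/
import Mathlib

section
/- Let ρ be a density operator and Π an operator with 0 ≤ Π ≤ I, Π^Γ ≥ 0, and Tr Π = K. Then for any positive semidefinite operators A, B and any real λ with A ≥ ρ + B^Γ − λI, one has Tr(Πρ) ≤ Tr A + λK. -/
open Matrix
open scoped ComplexOrder

/-- Partial transpose on the second tensor factor. -/
def partialTranspose {α β : Type*} (M : Matrix (α × β) (α × β) ℂ) :
    Matrix (α × β) (α × β) ℂ :=
  fun p q => M (p.1, q.2) (q.1, p.2)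

lemma psd_trace_nonneg {n : Type*} [Fintype n] [DecidableEq n]
    {M : Matrix n n ℂ} (hM : M.PosSemidef) : 0 ≤ M.trace := by
  rw [Matrix.trace]
  apply Finset.sum_nonneg
  intro i _
  have := hM.dotProduct_mulVec_nonneg (Pi.single i 1)
  simpa [dotProduct, Matrix.mulVec, Pi.single_apply] using this

open scoped MatrixOrder in
lemma psd_trace_mul_nonneg {n : Type*} [Fintype n] [DecidableEq n]
    {M N : Matrix n n ℂ} (hM : M.PosSemidef) (hN : N.PosSemidef) :
    0 ≤ (M * N).trace := by
  have h1 : M * N = CFC.sqrt M * (CFC.sqrt M * N) := by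
    rw [← mul_assoc, CFC.sqrt_mul_sqrt_self M hM.nonneg]
  rw [h1, Matrix.trace_mul_comm, mul_assoc]
  have hherm : (CFC.sqrt M)ᴴ = CFC.sqrt M := (CFC.sqrt_nonneg M).posSemidef.isHermitian
  have : ((CFC.sqrt M * N) * (CFC.sqrt M)ᴴ).PosSemidef := hN.mul_mul_conjTranspose_same _
  rw [hherm] at this
  rw [← mul_assoc]
  exact psd_trace_nonneg this

lemma ptrans_trace_mul {α β : Type*} [Fintype α] [Fintype β]
    (X Y : Matrix (α × β) (α × β) ℂ) :
    ((partialTranspose X) * Y).trace = (X * partialTranspose Y).trace := by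
  simp only [Matrix.trace, Matrix.diag, Matrix.mul_apply, partialTranspose]
  have l : ∀ (f : (α × β) → (α × β) → ℂ),
      (∑ x, ∑ y, f x y) = ∑ z : (α × β) × (α × β), f z.1 z.2 :=
    fun f => (Fintype.sum_prod_type (fun z => f z.1 z.2)).symm
  rw [l, l]
  exact Fintype.sum_equiv ⟨fun x => ((x.1.1, x.2.2), (x.2.1, x.1.2)),
    fun x => ((x.1.1, x.2.2), (x.2.1, x.1.2)), fun x => rfl, fun x => rfl⟩ _ _
    (fun x => rfl)

theorem trace_bound_of_feasible {dA dB : ℕ}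
    (ρ Pi A B : Matrix (Fin dA × Fin dB) (Fin dA × Fin dB) ℂ)
    (hρ : ρ.PosSemidef) (hρtr : ρ.trace = 1)
    (hPi : Pi.PosSemidef) (hPiI : (1 - Pi).PosSemidef)
    (hPiΓ : (partialTranspose Pi).PosSemidef)
    (K : ℝ) (hPitr : Pi.trace = (K : ℂ))
    (hA : A.PosSemidef) (hB : B.PosSemidef) (lam : ℝ)
    (hcon : (A - (ρ + partialTranspose B - (lam : ℂ) • 1)).PosSemidef) :
    ((Pi * ρ).trace).re ≤ (A.trace).re + lam * K := by
  have h1 : 0 ≤ (Pi * (A - (ρ + partialTranspose B - (lam : ℂ) • 1))).trace :=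
    psd_trace_mul_nonneg hPi hcon
  have h2 : 0 ≤ (Pi * partialTranspose B).trace := by
    rw [← ptrans_trace_mul]
    exact psd_trace_mul_nonneg hPiΓ hB
  have h3 : 0 ≤ ((1 - Pi) * A).trace := psd_trace_mul_nonneg hPiI hA
  have hexp : (Pi * (A - (ρ + partialTranspose B - (lam : ℂ) • 1))).trace
      = (Pi * A).trace - (Pi * ρ).trace - (Pi * partialTranspose B).trace
        + (lam : ℂ) * (K : ℂ) := by
    simp only [mul_sub, mul_add, Matrix.mul_smul, mul_one,
      Matrix.trace_sub, Matrix.trace_add, Matrix.trace_smul, hPitr, smul_eq_mul]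
    ring
  have hexp3 : ((1 - Pi) * A).trace = A.trace - (Pi * A).trace := by
    rw [sub_mul, one_mul, Matrix.trace_sub]
  rw [hexp] at h1
  rw [hexp3] at h3
  have e1 := (Complex.le_def.mp h1).1
  have e2 := (Complex.le_def.mp h2).1
  have e3 := (Complex.le_def.mp h3).1
  simp only [Complex.zero_re, Complex.add_re, Complex.sub_re,
    ← Complex.ofReal_mul, Complex.ofReal_re] at e1 e2 e3
  linarith
end

section
/- Let ρ be a density operator on a finite-dimensional bipartite Hilbert space and K > 0. Then sup over all Π with 0 ≤ Π ≤ I, Π^Γ ≥ 0, Tr Π = K of Tr(Πρ) is at most inf over Hermitian operators D of [Tr(ρ − D)_+ + K·λ_max(D^Γ)], where (X)_+ denotes the positive part of a Hermitian operator X and λ_max the maximal eigenvalue. -/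
open Matrix
open scoped ComplexOrder

section Aux
variable {n : Type*} [Fintype n] [DecidableEq n]
lemma aux_diag_conj (M U : Matrix n n ℂ) (i : n) :
    (star U * M * U) i i = star (fun p => U p i) ⬝ᵥ M *ᵥ (fun p => U p i) := by
  simp [Matrix.mul_apply, dotProduct, mulVec, Finset.mul_sum, Finset.sum_mul, star_apply]
  rw [Finset.sum_comm]
  congr 1; ext p; congr 1; ext q; ring

lemma aux_trace_mul_herm (M X : Matrix n n ℂ) (hX : X.IsHermitian) :
    (M * X).trace = ∑ i, (hX.eigenvalues i : ℂ) *
      ((star (hX.eigenvectorUnitary : Matrix n n ℂ) * M *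
        (hX.eigenvectorUnitary : Matrix n n ℂ)) i i) := by
  conv_lhs => rw [hX.spectral_theorem, Unitary.conjStarAlgAut_apply]
  rw [← mul_assoc, ← mul_assoc, Matrix.trace_mul_cycle, ← mul_assoc]
  simp [Matrix.trace, Matrix.diag, Matrix.mul_diagonal, ← mul_assoc, mul_comm]

lemma aux_qf_re_nonneg {M : Matrix n n ℂ} (hM : M.PosSemidef) (v : n → ℂ) :
    0 ≤ (star v ⬝ᵥ M *ᵥ v).re := by
  have := hM.dotProduct_mulVec_nonneg v
  rw [Complex.le_def] at this
  simpa using this.1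

/-- general bound: for `Pi` with `0 ≤ Pi ≤ 1` and Hermitian `X`,
`Re (Tr (Pi X)) ≤ ∑ max (λ i) 0`. -/
lemma aux_boundA (Pi X : Matrix n n ℂ) (hPi : Pi.PosSemidef)
    (hPiI : (1 - Pi).PosSemidef) (hX : X.IsHermitian) :
    ((Pi * X).trace).re ≤ ∑ i, max (hX.eigenvalues i) 0 := by
  set U : Matrix n n ℂ := (hX.eigenvectorUnitary : Matrix n n ℂ) with hU
  have hUU' : star U * U = 1 := (Matrix.mem_unitaryGroup_iff').mp hX.eigenvectorUnitary.2
  rw [aux_trace_mul_herm Pi X hX, Complex.re_sum]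
  apply Finset.sum_le_sum
  intro i _
  set v : n → ℂ := fun p => U p i with hv
  have hd : (star U * Pi * U) i i = star v ⬝ᵥ Pi *ᵥ v := aux_diag_conj Pi U i
  have hvv : star v ⬝ᵥ v = 1 := by
    have h1 : (star U * (1 : Matrix n n ℂ) * U) i i = star v ⬝ᵥ (1 : Matrix n n ℂ) *ᵥ v :=
      aux_diag_conj 1 U i
    rw [mul_one, hUU', one_mulVec] at h1
    rw [← h1, Matrix.one_apply_eq]
  have hc0 : 0 ≤ (star v ⬝ᵥ Pi *ᵥ v).re := aux_qf_re_nonneg hPi v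
  have hc1 : (star v ⬝ᵥ Pi *ᵥ v).re ≤ 1 := by
    have := aux_qf_re_nonneg hPiI v
    rw [Matrix.sub_mulVec, dotProduct_sub, Matrix.one_mulVec, hvv] at this
    simp only [Complex.sub_re, Complex.one_re] at this
    linarith
  rw [hd, Complex.re_ofReal_mul]
  rcases le_or_gt 0 (hX.eigenvalues i) with h | h
  · calc hX.eigenvalues i * (star v ⬝ᵥ Pi *ᵥ v).re ≤ hX.eigenvalues i * 1 :=
        mul_le_mul_of_nonneg_left hc1 h
    _ = hX.eigenvalues i := mul_one _
    _ ≤ max (hX.eigenvalues i) 0 := le_max_left _ _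
  · calc hX.eigenvalues i * (star v ⬝ᵥ Pi *ᵥ v).re ≤ 0 :=
        mul_nonpos_of_nonpos_of_nonneg h.le hc0
    _ ≤ max (hX.eigenvalues i) 0 := le_max_right _ _

/-- general bound: for `A ≥ 0` and Hermitian `B`,
`Re (Tr (A B)) ≤ Re(Tr A) * sup λ`. -/
lemma aux_boundB (A B : Matrix n n ℂ) (hA : A.PosSemidef) (hB : B.IsHermitian) :
    ((A * B).trace).re ≤ (A.trace).re * ⨆ i, hB.eigenvalues i := by
  set U : Matrix n n ℂ := (hB.eigenvectorUnitary : Matrix n n ℂ) with hU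
  have hUU : U * star U = 1 := (Matrix.mem_unitaryGroup_iff).mp hB.eigenvectorUnitary.2
  rw [aux_trace_mul_herm A B hB, Complex.re_sum]
  have hsum : ∑ i, ((star U * A * U) i i).re = (A.trace).re := by
    have : ∑ i, (star U * A * U) i i = (star U * A * U).trace := rfl
    rw [← Complex.re_sum, this, Matrix.trace_mul_cycle, hUU, one_mul]
  calc ∑ i, ((hB.eigenvalues i : ℂ) * ((star U * A * U) i i)).re
      ≤ ∑ i, (⨆ j, hB.eigenvalues j) * ((star U * A * U) i i).re := by
        apply Finset.sum_le_sum
        intro i _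
        rw [Complex.re_ofReal_mul]
        have hnn : 0 ≤ ((star U * A * U) i i).re := by
          rw [aux_diag_conj]; exact aux_qf_re_nonneg hA _
        exact mul_le_mul_of_nonneg_right (le_ciSup (Set.Finite.bddAbove
          (Set.finite_range _)) i) hnn
    _ = (A.trace).re * ⨆ i, hB.eigenvalues i := by
        rw [← Finset.mul_sum, hsum, mul_comm]
end Aux

section AuxPT
variable {α β : Type*} [Fintype α] [Fintype β]
lemma aux_trace_pt (A : Matrix (α × β) (α × β) ℂ) :
    (partialTranspose A).trace = A.trace := by
  simp [Matrix.trace, Matrix.diag, partialTranspose]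

lemma aux_trace_pt_mul (A B : Matrix (α × β) (α × β) ℂ) :
    (partialTranspose A * partialTranspose B).trace = (A * B).trace := by
  simp only [Matrix.trace, Matrix.diag, Matrix.mul_apply, partialTranspose]
  rw [← Finset.sum_product', ← Finset.sum_product']
  refine Finset.sum_nbij' (fun x => ((x.1.1, x.2.2), (x.2.1, x.1.2)))
    (fun x => ((x.1.1, x.2.2), (x.2.1, x.1.2))) ?_ ?_ ?_ ?_ ?_ <;> simp
end AuxPT

/-- The semidefinite-programming duality bound: for every feasible `Pi`
(`0 ≤ Pi ≤ I`, `Pi^Γ ≥ 0`, `Tr Pi = K`) and every Hermitian `D`,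
`Tr(Pi ρ) ≤ Tr(ρ - D)₊ + K · λ_max(D^Γ)`; hence the supremum of the left-hand
side is at most the infimum over Hermitian `D` of the right-hand side. -/
theorem sup_trace_le_inf_dual {dA dB : ℕ} (hdA : 0 < dA) (hdB : 0 < dB)
    (ρ : Matrix (Fin dA × Fin dB) (Fin dA × Fin dB) ℂ)
    (hρ : ρ.PosSemidef) (hρtr : ρ.trace = 1) (K : ℝ) (hK : 0 < K)
    (Pi : Matrix (Fin dA × Fin dB) (Fin dA × Fin dB) ℂ)
    (hPi : Pi.PosSemidef) (hPiI : (1 - Pi).PosSemidef)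
    (hPiΓ : (partialTranspose Pi).PosSemidef) (hPitr : Pi.trace = (K : ℂ))
    (D : Matrix (Fin dA × Fin dB) (Fin dA × Fin dB) ℂ)
    (hρD : (ρ - D).IsHermitian) (hDΓ : (partialTranspose D).IsHermitian) :
    ((Pi * ρ).trace).re ≤
      (∑ i, max (hρD.eigenvalues i) 0) + K * (⨆ i, hDΓ.eigenvalues i) := by
  have hsplit : (Pi * ρ).trace = (Pi * (ρ - D)).trace + (Pi * D).trace := by
    rw [← Matrix.trace_add, ← Matrix.mul_add, sub_add_cancel]
  have hA : ((Pi * (ρ - D)).trace).re ≤ ∑ i, max (hρD.eigenvalues i) 0 :=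
    aux_boundA Pi (ρ - D) hPi hPiI hρD
  have hB : ((Pi * D).trace).re ≤ K * ⨆ i, hDΓ.eigenvalues i := by
    have h1 : (Pi * D).trace = (partialTranspose Pi * partialTranspose D).trace :=
      (aux_trace_pt_mul Pi D).symm
    have h2 := aux_boundB (partialTranspose Pi) (partialTranspose D) hPiΓ hDΓ
    rw [aux_trace_pt, hPitr] at h2
    simpa [h1, Complex.ofReal_re] using h2
  rw [hsplit, Complex.add_re]
  linarith
end

section
/- For Hermitian operators A, D on a finite-dimensional Hilbert space, inf{Tr A : A ≥ 0 and A ≥ D} = Tr(D_+), where D_+ is the positive part of D. -/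
open Matrix
open scoped ComplexOrder

lemma diag_re_nonneg {n : ℕ} {M : Matrix (Fin n) (Fin n) ℂ} (hM : M.PosSemidef) (i : Fin n) :
    0 ≤ (M i i).re := by
  have := hM.re_dotProduct_nonneg (Pi.single i 1)
  simpa [dotProduct, mulVec, Pi.single_apply, Finset.sum_ite_eq, Finset.mul_sum] using this

theorem sInf_trace_dominating_eq_posPart {n : ℕ}
    (D : Matrix (Fin n) (Fin n) ℂ) (hD : D.IsHermitian) :
    sInf {x : ℝ | ∃ A : Matrix (Fin n) (Fin n) ℂ,
        A.PosSemidef ∧ (A - D).PosSemidef ∧ x = (A.trace).re} =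
      ∑ i, max (hD.eigenvalues i) 0 := by
  set U : Matrix (Fin n) (Fin n) ℂ := (hD.eigenvectorUnitary : Matrix (Fin n) (Fin n) ℂ) with hU
  have hUU : U * star U = 1 := (Matrix.mem_unitaryGroup_iff).mp hD.eigenvectorUnitary.2
  have hUU' : star U * U = 1 := (Matrix.mem_unitaryGroup_iff').mp hD.eigenvectorUnitary.2
  have hspec : D = U * diagonal (RCLike.ofReal ∘ hD.eigenvalues) * star U := hD.spectral_theorem
  set Ap : Matrix (Fin n) (Fin n) ℂ :=
    U * diagonal (fun i => ((max (hD.eigenvalues i) 0 : ℝ) : ℂ)) * star U with hAp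
  have hmem : (∑ i, max (hD.eigenvalues i) 0) ∈ {x : ℝ | ∃ A : Matrix (Fin n) (Fin n) ℂ,
      A.PosSemidef ∧ (A - D).PosSemidef ∧ x = (A.trace).re} := by
    refine ⟨Ap, ?_, ?_, ?_⟩
    · have h1 : (diagonal (fun i => ((max (hD.eigenvalues i) 0 : ℝ) : ℂ))).PosSemidef :=
        PosSemidef.diagonal fun i => show (0:ℂ) ≤ _ by
          exact_mod_cast le_max_right (hD.eigenvalues i) 0
      simpa [star_eq_conjTranspose, hAp] using h1.mul_mul_conjTranspose_same U
    · have hd : diagonal (fun i => ((max (hD.eigenvalues i) 0 : ℝ) : ℂ)) -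
          diagonal (RCLike.ofReal ∘ hD.eigenvalues) =
          diagonal (fun i => ((max (hD.eigenvalues i) 0 - hD.eigenvalues i : ℝ) : ℂ)) := by
        rw [diagonal_sub]; congr 1; funext i; simp [Function.comp]
      have key : Ap - (U * diagonal (RCLike.ofReal ∘ hD.eigenvalues) * star U) =
          U * diagonal (fun i => ((max (hD.eigenvalues i) 0 - hD.eigenvalues i : ℝ) : ℂ)) * star U := by
        rw [hAp, ← Matrix.sub_mul, ← Matrix.mul_sub, hd]
      have key2 : Ap - D = Ap - (U * diagonal (RCLike.ofReal ∘ hD.eigenvalues) * star U) := by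
        rw [← hspec]
      rw [key2, key]
      have h1 : (diagonal (fun i => ((max (hD.eigenvalues i) 0 - hD.eigenvalues i : ℝ) : ℂ))).PosSemidef :=
        PosSemidef.diagonal fun i => show (0:ℂ) ≤ _ by
          have : (0:ℝ) ≤ max (hD.eigenvalues i) 0 - hD.eigenvalues i := by
            simp [sub_nonneg, le_max_left]
          exact_mod_cast this
      simpa [star_eq_conjTranspose] using h1.mul_mul_conjTranspose_same U
    · rw [hAp, trace_mul_cycle, hUU', one_mul, trace_diagonal]
      push_cast
      simp
  refine le_antisymm (csInf_le ⟨0, ?_⟩ hmem) (le_csInf ⟨_, hmem⟩ ?_)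
  · rintro x ⟨A, hA, -, rfl⟩
    rw [Matrix.trace]
    simp only [Complex.re_sum, diag]
    exact Finset.sum_nonneg fun i _ => diag_re_nonneg hA i
  · rintro x ⟨A, hA, hAD, rfl⟩
    set B := star U * A * U with hB
    have hBps : B.PosSemidef := by
      simpa [star_eq_conjTranspose, hB] using hA.conjTranspose_mul_mul_same U
    have hBD : (B - diagonal (RCLike.ofReal ∘ hD.eigenvalues)).PosSemidef := by
      have h0 := hAD.conjTranspose_mul_mul_same U
      have he : Uᴴ * (A - D) * U = B - diagonal (RCLike.ofReal ∘ hD.eigenvalues) := by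
        rw [Matrix.mul_sub, Matrix.sub_mul, hB, ← star_eq_conjTranspose]
        rw [sub_right_inj]
        have h5 : star U * (U * diagonal (RCLike.ofReal ∘ hD.eigenvalues) * star U) * U =
            diagonal (RCLike.ofReal ∘ hD.eigenvalues) := by
          rw [← mul_assoc, ← mul_assoc, hUU', one_mul, mul_assoc, hUU', mul_one]
        rw [← hspec] at h5
        exact h5
      rwa [he] at h0
    have htr : (A.trace).re = (B.trace).re := by
      rw [hB, trace_mul_cycle, hUU, one_mul]
    rw [htr, Matrix.trace]
    simp only [Complex.re_sum, diag]
    refine Finset.sum_le_sum fun i _ => ?_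
    refine max_le ?_ (diag_re_nonneg hBps i)
    have h2 := diag_re_nonneg hBD i
    simp only [Matrix.sub_apply, diagonal_apply_eq, Complex.sub_re, Function.comp] at h2
    have h3 : ((hD.eigenvalues i : ℝ) : ℂ).re = hD.eigenvalues i := by simp
    simp only [RCLike.ofReal_alg, Complex.real_smul, mul_one, Complex.ofReal_re] at h2
    linarith [h2]
end

section
/- A state ρ on ℂ^d ⊗ ℂ^d satisfying (U ⊗ U) ρ (U† ⊗ U†) = ρ for all unitaries U is of the form ρ = (1/(d² + dβ))(I + βV) for some real β with −1 ≤ β ≤ 1, where V is the flip (swap) operator. -/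
open Matrix
open scoped ComplexOrder Kronecker

/-- The flip (swap) operator `V(φ ⊗ ψ) = ψ ⊗ φ` on `ℂ^d ⊗ ℂ^d`. -/
def swapOp (d : ℕ) : Matrix (Fin d × Fin d) (Fin d × Fin d) ℂ :=
  fun p q => if p.1 = q.2 ∧ p.2 = q.1 then 1 else 0

section Aux

lemma werner_conj_entry {d : ℕ} (U : Matrix (Fin d) (Fin d) ℂ)
    (ρ : Matrix (Fin d × Fin d) (Fin d × Fin d) ℂ) (i j k l : Fin d) :
    ((U ⊗ₖ U) * ρ * (U ⊗ₖ U)ᴴ) (i,j) (k,l) =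
      ∑ r, ∑ s, ∑ p, ∑ q, U i p * U j q * ρ (p,q) (r,s) * star (U k r) * star (U l s) := by
  simp only [Matrix.mul_apply, Matrix.conjTranspose_apply, kroneckerMap_apply,
    Fintype.sum_prod_type, Finset.sum_mul, Finset.mul_sum, star_mul']
  apply Finset.sum_congr rfl; intro p _
  apply Finset.sum_congr rfl; intro q _
  apply Finset.sum_congr rfl; intro r _
  apply Finset.sum_congr rfl; intro s _
  ring

lemma werner_diag_conj {d : ℕ} (v : Fin d → ℂ) (ρ : Matrix (Fin d × Fin d) (Fin d × Fin d) ℂ)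
    (i j k l : Fin d) :
    ((Matrix.diagonal v ⊗ₖ Matrix.diagonal v) * ρ *
        (Matrix.diagonal v ⊗ₖ Matrix.diagonal v)ᴴ) (i,j) (k,l)
      = v i * v j * star (v k) * star (v l) * ρ (i,j) (k,l) := by
  rw [Matrix.diagonal_kronecker_diagonal, Matrix.diagonal_conjTranspose,
    Matrix.mul_diagonal, Matrix.diagonal_mul]
  simp [Pi.star_apply, star_mul']
  ring

noncomputable def phaseU (d : ℕ) (t : Fin d) : Matrix (Fin d) (Fin d) ℂ :=
  Matrix.diagonal (fun m => if m = t then Complex.I else 1)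

lemma phaseU_mem (d : ℕ) (t : Fin d) : phaseU d t ∈ Matrix.unitaryGroup (Fin d) ℂ := by
  rw [Matrix.mem_unitaryGroup_iff]
  have h1 : star (phaseU d t)
      = Matrix.diagonal (fun m => star (if m = t then Complex.I else 1)) := by
    simp [phaseU, Matrix.star_eq_conjTranspose, Matrix.diagonal_conjTranspose]
  rw [h1, phaseU, Matrix.diagonal_mul_diagonal]
  ext p q
  by_cases h : p = t <;> simp [Matrix.diagonal_apply, Matrix.one_apply, h, Complex.mul_conj]

lemma werner_pair_eq {α : Type*} [DecidableEq α] {i j k l : α}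
    (h : ∀ t, ((if i = t then 1 else 0) + (if j = t then 1 else 0) : ℕ)
      = (if k = t then 1 else 0) + (if l = t then 1 else 0)) :
    (k = i ∧ l = j) ∨ (k = j ∧ l = i) := by
  have hm : (i ::ₘ {j} : Multiset α) = k ::ₘ {l} := by
    rw [Multiset.ext]
    intro t
    have := h t
    simp only [Multiset.count_cons, Multiset.count_singleton]
    simp only [eq_comm (a := t)] at *
    omega
  rcases Multiset.cons_eq_cons.1 hm with ⟨e1, e2⟩ | ⟨hne, cs, e1, e2⟩
  · exact Or.inl ⟨e1.symm, (Multiset.singleton_inj.mp e2).symm⟩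
  · rw [Multiset.singleton_eq_cons_iff] at e1 e2
    exact Or.inr ⟨e1.1.symm, e2.1⟩

def permU {d : ℕ} (σ : Equiv.Perm (Fin d)) : Matrix (Fin d) (Fin d) ℂ :=
  fun p q => if q = σ.symm p then 1 else 0

lemma permU_mem {d : ℕ} (σ : Equiv.Perm (Fin d)) : permU σ ∈ Matrix.unitaryGroup (Fin d) ℂ := by
  rw [Matrix.mem_unitaryGroup_iff]
  ext p q
  simp only [Matrix.mul_apply, Matrix.star_eq_conjTranspose, Matrix.conjTranspose_apply, permU,
    Matrix.one_apply]
  simp only [apply_ite (star : ℂ → ℂ), star_one, star_zero, ite_mul, one_mul, zero_mul, mul_ite,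
    mul_one, mul_zero]
  simp only [Finset.sum_ite_irrel, Finset.sum_const_zero, Finset.sum_ite_eq',
    Finset.mem_univ, if_true]
  by_cases h : p = q
  · simp [h]
  · rw [if_neg, if_neg h]
    exact fun hh => h (σ.symm.injective hh).symm

lemma permU_conj {d : ℕ} (σ : Equiv.Perm (Fin d)) (ρ : Matrix (Fin d × Fin d) (Fin d × Fin d) ℂ)
    (i j k l : Fin d) :
    ((permU σ ⊗ₖ permU σ) * ρ * (permU σ ⊗ₖ permU σ)ᴴ) (i,j) (k,l)
      = ρ (σ.symm i, σ.symm j) (σ.symm k, σ.symm l) := by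
  rw [werner_conj_entry]
  simp only [permU, apply_ite (star : ℂ → ℂ), star_one, star_zero, ite_mul, one_mul, zero_mul,
    mul_ite, mul_one, mul_zero]
  simp only [Finset.sum_ite_irrel, Finset.sum_const_zero, Finset.sum_ite_eq',
    Finset.mem_univ, if_true]

noncomputable def rc : ℂ := ((Real.sqrt 2)⁻¹ : ℝ)

lemma rc_star : star rc = rc := by simp [rc]

lemma rc_sq : rc * rc = 1/2 := by
  rw [rc, ← Complex.ofReal_mul, ← mul_inv, Real.mul_self_sqrt (by norm_num)]
  norm_num

noncomputable def rotU (d : ℕ) [NeZero d] : Matrix (Fin d) (Fin d) ℂ :=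
  fun p q => if p = 0 then (if q = 0 then rc else if q = 1 then rc else 0)
    else if p = 1 then (if q = 0 then -rc else if q = 1 then rc else 0)
    else if p = q then 1 else 0

variable {d : ℕ} [NeZero d]

lemma werner_row0 (h01 : (0:Fin d) ≠ 1) (k : Fin d) :
    rotU d 0 k = rc * (if k = 0 then 1 else 0) + rc * (if k = 1 then 1 else 0) := by
  have hd1 : d ≠ 1 := fun h => h01 (by subst h; apply Subsingleton.elim)
  simp only [rotU, if_pos rfl]
  by_cases h1 : k = 0 <;> by_cases h2 : k = 1
  · exact absurd (h1.symm.trans h2) h01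
  all_goals simp [h1, h2, hd1]

lemma werner_row1 (h01 : (0:Fin d) ≠ 1) (k : Fin d) :
    rotU d 1 k = (-rc) * (if k = 0 then 1 else 0) + rc * (if k = 1 then 1 else 0) := by
  have hd1 : d ≠ 1 := fun h => h01 (by subst h; apply Subsingleton.elim)
  simp only [rotU, if_neg (Ne.symm h01), if_pos rfl]
  by_cases h1 : k = 0 <;> by_cases h2 : k = 1
  · exact absurd (h1.symm.trans h2) h01
  all_goals simp [h1, h2, hd1]

lemma werner_rowe {p : Fin d} (hp0 : p ≠ 0) (hp1 : p ≠ 1) (k : Fin d) :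
    rotU d p k = if p = k then 1 else 0 := by
  simp only [rotU, if_neg hp0, if_neg hp1]

lemma rot_mem (h01 : (0:Fin d) ≠ 1) : rotU d ∈ Matrix.unitaryGroup (Fin d) ℂ := by
  rw [Matrix.mem_unitaryGroup_iff]
  ext p q
  simp only [Matrix.mul_apply, Matrix.star_eq_conjTranspose, Matrix.conjTranspose_apply]
  by_cases hp0 : p = 0 <;> by_cases hp1 : p = 1 <;> by_cases hq0 : q = 0 <;> by_cases hq1 : q = 1
  · exact absurd (hp0.symm.trans hp1) h01
  · exact absurd (hp0.symm.trans hp1) h01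
  · exact absurd (hp0.symm.trans hp1) h01
  · exact absurd (hp0.symm.trans hp1) h01
  all_goals try exact absurd (hq0.symm.trans hq1) h01
  all_goals subst_vars
  · simp only [werner_row0 h01]
    simp [star_add, star_mul', rc_star, add_mul, mul_add, ite_mul, mul_ite, mul_zero, zero_mul,
      star_zero, star_one, apply_ite (star : ℂ → ℂ), Finset.sum_add_distrib, Finset.sum_ite_eq',
      Finset.mem_univ, Matrix.one_apply, h01, Ne.symm h01, rc_sq]
    norm_num [rc_sq]
  · simp only [werner_row0 h01, werner_row1 h01]
    simp [star_add, star_mul', rc_star, add_mul, mul_add, ite_mul, mul_ite, mul_zero, zero_mul,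
      star_zero, star_one, apply_ite (star : ℂ → ℂ), Finset.sum_add_distrib, Finset.sum_ite_eq',
      Finset.mem_univ, Matrix.one_apply, h01, Ne.symm h01]
  · simp only [werner_row0 h01, werner_rowe hq0 hq1]
    simp [star_add, star_mul', rc_star, add_mul, mul_add, ite_mul, mul_ite, mul_zero, zero_mul,
      star_zero, star_one, apply_ite (star : ℂ → ℂ), Finset.sum_add_distrib, Finset.sum_ite_eq,
      Finset.sum_ite_eq', Finset.mem_univ, Matrix.one_apply, h01, Ne.symm h01, hq0, hq1,
      Ne.symm hq0, Ne.symm hq1]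
  · simp only [werner_row0 h01, werner_row1 h01]
    simp [star_add, star_mul', rc_star, add_mul, mul_add, ite_mul, mul_ite, mul_zero, zero_mul,
      star_zero, star_one, apply_ite (star : ℂ → ℂ), Finset.sum_add_distrib, Finset.sum_ite_eq',
      Finset.mem_univ, Matrix.one_apply, h01, Ne.symm h01]
  · simp only [werner_row1 h01]
    simp [star_add, star_mul', rc_star, add_mul, mul_add, ite_mul, mul_ite, mul_zero, zero_mul,
      star_zero, star_one, apply_ite (star : ℂ → ℂ), Finset.sum_add_distrib, Finset.sum_ite_eq',
      Finset.mem_univ, Matrix.one_apply, h01, Ne.symm h01]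
    norm_num [rc_sq]
  · simp only [werner_row1 h01, werner_rowe hq0 hq1]
    simp [star_add, star_mul', rc_star, add_mul, mul_add, ite_mul, mul_ite, mul_zero, zero_mul,
      star_zero, star_one, apply_ite (star : ℂ → ℂ), Finset.sum_add_distrib, Finset.sum_ite_eq,
      Finset.sum_ite_eq', Finset.mem_univ, Matrix.one_apply, h01, Ne.symm h01, hq0, hq1,
      Ne.symm hq0, Ne.symm hq1]
  · simp only [werner_rowe hp0 hp1, werner_row0 h01]
    simp [star_add, star_mul', rc_star, add_mul, mul_add, ite_mul, mul_ite, mul_zero, zero_mul,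
      star_zero, star_one, apply_ite (star : ℂ → ℂ), Finset.sum_add_distrib, Finset.sum_ite_eq,
      Finset.sum_ite_eq', Finset.mem_univ, Matrix.one_apply, h01, Ne.symm h01, hp0, hp1,
      Ne.symm hp0, Ne.symm hp1]
  · simp only [werner_rowe hp0 hp1, werner_row1 h01]
    simp [star_add, star_mul', rc_star, add_mul, mul_add, ite_mul, mul_ite, mul_zero, zero_mul,
      star_zero, star_one, apply_ite (star : ℂ → ℂ), Finset.sum_add_distrib, Finset.sum_ite_eq,
      Finset.sum_ite_eq', Finset.mem_univ, Matrix.one_apply, h01, Ne.symm h01, hp0, hp1,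
      Ne.symm hp0, Ne.symm hp1]
  · simp only [werner_rowe hp0 hp1, werner_rowe hq0 hq1]
    simp [ite_mul, mul_ite, mul_zero, zero_mul, star_zero, star_one,
      apply_ite (star : ℂ → ℂ), Finset.sum_ite_eq, Finset.mem_univ, Matrix.one_apply]

lemma werner_rot_rel (h01 : (0:Fin d) ≠ 1) (ρ : Matrix (Fin d × Fin d) (Fin d × Fin d) ℂ)
    (heq : (rotU d ⊗ₖ rotU d) * ρ * (rotU d ⊗ₖ rotU d)ᴴ = ρ)
    (hv : ∀ i j k l : Fin d, ¬(k = i ∧ l = j) → ¬(k = j ∧ l = i) → ρ (i,j) (k,l) = 0)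
    (ha2 : ρ (1,0) (1,0) = ρ (0,1) (0,1))
    (hb2 : ρ (1,0) (0,1) = ρ (0,1) (1,0))
    (hc2 : ρ (1,1) (1,1) = ρ (0,0) (0,0)) :
    ρ ((0:Fin d),(0:Fin d)) ((0:Fin d),(0:Fin d)) = ρ (0,1) (0,1) + ρ (0,1) (1,0) := by
  have h := congrFun (congrFun heq ((0:Fin d),(0:Fin d))) ((0:Fin d),(0:Fin d))
  rw [werner_conj_entry] at h
  simp only [werner_row0 h01] at h
  simp only [star_add, star_mul', rc_star, star_one, star_zero, apply_ite (star : ℂ → ℂ),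
    add_mul, mul_add, ite_mul, mul_ite, zero_mul, mul_zero, Finset.sum_add_distrib,
    Finset.sum_ite_irrel, Finset.sum_const_zero, Finset.sum_ite_eq', Finset.mem_univ,
    if_true] at h
  have hd1 : d ≠ 1 := fun hh => h01 (by subst hh; apply Subsingleton.elim)
  rw [hv 0 0 1 0 (by simp [h01, hd1]) (by simp [h01, hd1]),
    hv 0 0 0 1 (by simp [h01, hd1]) (by simp [h01, hd1]),
    hv 1 0 0 0 (by simp [h01, hd1]) (by simp [h01, hd1]),
    hv 0 1 0 0 (by simp [h01, hd1]) (by simp [h01, hd1]),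
    hv 1 1 0 0 (by simp [h01, hd1]) (by simp [h01, hd1]),
    hv 0 0 1 1 (by simp [h01, hd1]) (by simp [h01, hd1]),
    hv 1 1 1 0 (by simp [h01, hd1]) (by simp [h01, hd1]),
    hv 1 1 0 1 (by simp [h01, hd1]) (by simp [h01, hd1]),
    hv 1 0 1 1 (by simp [h01, hd1]) (by simp [h01, hd1]),
    hv 0 1 1 1 (by simp [h01, hd1]) (by simp [h01, hd1]),
    ha2, hb2, hc2] at h
  have h4 : rc^4 = 1/4 := by
    rw [show rc^4 = (rc*rc)*(rc*rc) by ring, rc_sq]; norm_num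
  ring_nf at h
  rw [h4] at h
  linear_combination (-2 : ℂ) * h

lemma werner_sum_two {α : Type*} [Fintype α] [DecidableEq α] {u v : α} (huv : u ≠ v) (A B : ℂ) :
    ∑ k : α, (if k = u then A else if k = v then B else 0) = A + B := by
  have h : ∀ k : α, (if k = u then A else if k = v then B else 0)
      = (if k = u then A else 0) + (if k = v then B else 0) := by
    intro k
    by_cases h1 : k = u <;> by_cases h2 : k = v
    · exact absurd (h1.symm.trans h2) huv
    · subst h1; simp [h2, Ne.symm huv]
    · subst h2; simp [h1, Ne.symm huv]
    · simp [h1, h2]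
  simp [h, Finset.sum_add_distrib, Finset.sum_ite_eq']

lemma werner_quad {ι : Type*} [Fintype ι] [DecidableEq ι] (ρ : Matrix ι ι ℂ) (hρ : ρ.PosSemidef)
    {u v : ι} (huv : u ≠ v) (ε : ℂ) (hε : star ε = ε) :
    0 ≤ ρ u u + ε * ρ u v + ε * ρ v u + ε * ε * ρ v v := by
  have h := hρ.dotProduct_mulVec_nonneg (fun p => if p = u then 1 else if p = v then ε else 0)
  have xdef : ∀ q : ι, (if q = u then (1:ℂ) else if q = v then ε else 0)
      = (if q = u then 1 else 0) + ε * (if q = v then 1 else 0) := by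
    intro q
    by_cases h1 : q = u <;> by_cases h2 : q = v
    · exact absurd (h1.symm.trans h2) huv
    · subst h1; simp [h2, Ne.symm huv]
    · subst h2; simp [h1, Ne.symm huv]
    · simp [h1, h2]
  simp only [dotProduct, Matrix.mulVec, Pi.star_apply, xdef] at h
  simp only [star_add, star_mul', hε, star_one, star_zero, apply_ite (star : ℂ → ℂ),
    add_mul, mul_add, ite_mul, mul_ite, zero_mul, mul_zero, mul_one, one_mul,
    Finset.sum_add_distrib, Finset.sum_ite_irrel, Finset.sum_const_zero, Finset.sum_ite_eq,
    Finset.sum_ite_eq', Finset.mem_univ, if_true, Finset.mul_sum, Finset.sum_mul] at h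
  convert h using 1
  ring

lemma werner_exists_perm (h01 : (0:Fin d) ≠ 1) {i j : Fin d} (hij : i ≠ j) :
    ∃ σ : Equiv.Perm (Fin d), σ 0 = i ∧ σ 1 = j := by
  set j' := (Equiv.swap (0:Fin d) i) j with hj'
  have hj'0 : j' ≠ 0 := by
    intro h
    exact hij ((Equiv.swap (0:Fin d) i).injective
      (h.trans (Equiv.swap_apply_right (0:Fin d) i).symm)).symm
  refine ⟨(Equiv.swap (1:Fin d) j').trans (Equiv.swap (0:Fin d) i), ?_, ?_⟩
  · have h0 : Equiv.swap (1:Fin d) j' 0 = 0 :=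
      Equiv.swap_apply_of_ne_of_ne h01 (Ne.symm hj'0)
    simp [Equiv.trans_apply, h0, Equiv.swap_apply_left]
  · have h1 : Equiv.swap (1:Fin d) j' 1 = j' := Equiv.swap_apply_left _ _
    simp [Equiv.trans_apply, h1, hj', Equiv.swap_apply_self]

lemma werner_swap_trace (d : ℕ) : (swapOp d).trace = (d : ℂ) := by
  rw [Matrix.trace]
  simp only [Matrix.diag, swapOp, Fintype.sum_prod_type]
  have h : ∀ i j : Fin d, (if i = j ∧ j = i then (1:ℂ) else 0) = if j = i then 1 else 0 := by
    intro i j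
    by_cases hh : j = i
    · subst hh; simp
    · have hx : ¬(i = j) := fun hx => hh hx.symm
      simp [hh, hx]
  simp_rw [h, Finset.sum_ite_eq', Finset.mem_univ, if_true]
  simp

end Aux

theorem UU_invariant_is_Werner {d : ℕ} (hd : 0 < d)
    (ρ : Matrix (Fin d × Fin d) (Fin d × Fin d) ℂ)
    (hρ : ρ.PosSemidef) (hρtr : ρ.trace = 1)
    (hinv : ∀ U : Matrix (Fin d) (Fin d) ℂ, U ∈ Matrix.unitaryGroup (Fin d) ℂ →
      (U ⊗ₖ U) * ρ * (U ⊗ₖ U)ᴴ = ρ) :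
    ∃ β : ℝ, -1 ≤ β ∧ β ≤ 1 ∧
      ρ = ((d ^ 2 + d * β : ℝ)⁻¹ : ℂ) • (1 + (β : ℂ) • swapOp d) := by
  haveI : NeZero d := ⟨hd.ne'⟩
  by_cases hd1 : d = 1
  · subst hd1
    refine ⟨0, by norm_num, by norm_num, ?_⟩
    have hone : ρ ((0:Fin 1),(0:Fin 1)) ((0:Fin 1),(0:Fin 1)) = 1 := by
      have h := hρtr
      rw [Matrix.trace] at h
      have hx : ∀ x : Fin 1 × Fin 1, ρ.diag x = ρ ((0:Fin 1),(0:Fin 1)) ((0:Fin 1),(0:Fin 1)) := by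
        intro x
        have hxx : x = ((0:Fin 1),(0:Fin 1)) := Subsingleton.elim _ _
        rw [hxx, Matrix.diag_apply]
      rw [Finset.sum_congr rfl (fun x _ => hx x), Finset.sum_const] at h
      simpa using h
    ext p q
    have hp : p = ((0:Fin 1),(0:Fin 1)) := Subsingleton.elim _ _
    have hq : q = ((0:Fin 1),(0:Fin 1)) := Subsingleton.elim _ _
    subst hp; subst hq
    rw [hone]
    simp [Matrix.one_apply, swapOp]
  · have hd2 : 2 ≤ d := by omega
    have h01 : (0:Fin d) ≠ 1 := by
      have hm : 1 % d = 1 := Nat.mod_eq_of_lt (by omega)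
      simp only [Ne, Fin.ext_iff, Fin.val_zero, Fin.val_one']
      omega
    -- step 1: phases kill non-matching entries
    have counts : ∀ i j k l t : Fin d, ρ (i,j) (k,l) ≠ 0 →
        ((if i = t then 1 else 0) + (if j = t then 1 else 0) : ℕ)
          = (if k = t then 1 else 0) + (if l = t then 1 else 0) := by
      intro i j k l t hne
      have heq := hinv (phaseU d t) (phaseU_mem d t)
      have h := congrFun (congrFun heq (i,j)) (k,l)
      rw [phaseU, werner_diag_conj] at h
      have hs : (if i = t then Complex.I else 1) * (if j = t then Complex.I else 1) *
          star (if k = t then Complex.I else 1) * star (if l = t then Complex.I else 1) = 1 :=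
        mul_right_cancel₀ hne (h.trans (one_mul _).symm)
      by_cases h1 : i = t <;> by_cases h2 : j = t <;> by_cases h3 : k = t <;>
          by_cases h4 : l = t <;>
        simp only [h1, h2, h3, h4, if_true, if_false, if_pos, if_neg, star_one,
          Complex.star_def, Complex.conj_I, one_mul, mul_one] at hs ⊢ <;>
        first
        | rfl
        | (exfalso; revert hs; simp [Complex.ext_iff]; done)
        | (exfalso; revert hs; simp [Complex.ext_iff]; norm_num)
    have hv : ∀ i j k l : Fin d, ¬(k = i ∧ l = j) → ¬(k = j ∧ l = i) → ρ (i,j) (k,l) = 0 := by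
      intro i j k l hx hy
      by_contra hne
      rcases werner_pair_eq (fun t => counts i j k l t hne) with h | h
      · exact hx h
      · exact hy h
    -- step 2: permutation invariance
    have hperm : ∀ (σ : Equiv.Perm (Fin d)) (i j k l : Fin d),
        ρ (σ i, σ j) (σ k, σ l) = ρ (i,j) (k,l) := by
      intro σ i j k l
      have heq := hinv (permU σ) (permU_mem σ)
      have h := congrFun (congrFun heq (σ i, σ j)) (σ k, σ l)
      rw [permU_conj] at h
      simpa using h.symm
    have ha : ∀ i j : Fin d, i ≠ j → ρ (i,j) (i,j) = ρ (0,1) (0,1) := by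
      intro i j hij
      obtain ⟨σ, hσ0, hσ1⟩ := werner_exists_perm h01 hij
      have := hperm σ 0 1 0 1
      rwa [hσ0, hσ1] at this
    have hb : ∀ i j : Fin d, i ≠ j → ρ (i,j) (j,i) = ρ (0,1) (1,0) := by
      intro i j hij
      obtain ⟨σ, hσ0, hσ1⟩ := werner_exists_perm h01 hij
      have := hperm σ 0 1 1 0
      rwa [hσ0, hσ1] at this
    have hc : ∀ i : Fin d, ρ (i,i) (i,i) = ρ (0,0) (0,0) := by
      intro i
      have := hperm (Equiv.swap 0 i) 0 0 0 0
      rwa [Equiv.swap_apply_left] at this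
    set a := ρ ((0:Fin d),(1:Fin d)) (0,1) with ha_def
    set b := ρ ((0:Fin d),(1:Fin d)) (1,0) with hb_def
    -- step 3: rotation relation
    have h10 : (1:Fin d) ≠ 0 := Ne.symm h01
    have hcab : ρ ((0:Fin d),(0:Fin d)) (0,0) = a + b :=
      werner_rot_rel h01 ρ (hinv (rotU d) (rot_mem h01)) hv
        (ha 1 0 h10) (hb 1 0 h10) (hc 1)
    -- step 4: the form of ρ
    have hform : ρ = a • (1 : Matrix (Fin d × Fin d) (Fin d × Fin d) ℂ) + b • swapOp d := by
      ext p q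
      obtain ⟨i, j⟩ := p
      obtain ⟨k, l⟩ := q
      simp only [Matrix.add_apply, Matrix.smul_apply, Matrix.one_apply, swapOp,
        smul_eq_mul, Prod.mk.injEq]
      by_cases h1 : k = i ∧ l = j
      · rw [h1.1, h1.2]
        by_cases h2 : i = j
        · rw [h2, hc j, hcab]
          simp
        · rw [ha i j h2]
          have hx : ¬(i = j ∧ j = i) := fun hh => h2 hh.1
          simp [hx]
      · by_cases h2 : k = j ∧ l = i
        · rw [h2.1, h2.2]
          have h2' : i ≠ j := fun hh => h1 ⟨h2.1.trans hh.symm, h2.2.trans hh⟩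
          rw [hb i j h2']
          simp [h2', Ne.symm h2']
        · have h1' : ¬(i = k ∧ j = l) := fun hh => h1 ⟨hh.1.symm, hh.2.symm⟩
          have h2'' : ¬(i = l ∧ j = k) := fun hh => h2 ⟨hh.2.symm, hh.1.symm⟩
          rw [hv i j k l h1 h2]
          simp [h1', h2'']
    -- step 5: trace equation
    have htr : a * (d:ℂ)^2 + b * d = 1 := by
      rw [hform] at hρtr
      rw [Matrix.trace_add, Matrix.trace_smul, Matrix.trace_smul, Matrix.trace_one,
        werner_swap_trace] at hρtr
      simpa [Fintype.card_prod, pow_two, smul_eq_mul] using hρtr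
    -- step 6: positivity facts
    have huv : ((0:Fin d),(1:Fin d)) ≠ ((1:Fin d),(0:Fin d)) := by
      simp [Prod.ext_iff, h01]
    have hq0 := werner_quad ρ hρ huv 0 (by simp)
    have hqp := werner_quad ρ hρ huv 1 (by simp)
    have hqm := werner_quad ρ hρ huv (-1) (by simp)
    rw [show ρ ((1:Fin d),(0:Fin d)) ((1:Fin d),(0:Fin d)) = a from ha 1 0 h10,
      show ρ ((1:Fin d),(0:Fin d)) ((0:Fin d),(1:Fin d)) = b from hb 1 0 h10] at hqp hqm
    simp only [zero_mul, mul_zero, add_zero, one_mul, mul_one, neg_mul, one_mul, neg_neg,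
      mul_neg] at hq0 hqp hqm
    -- realness
    have haim : a.im = 0 := by
      have := hq0
      rw [Complex.le_def] at this
      simpa using this.2.symm
    have hare : 0 ≤ a.re := by
      have := hq0
      rw [Complex.le_def] at this
      simpa using this.1
    have hbim : b.im = 0 := by
      have hherm := congrFun (congrFun hρ.1 ((1:Fin d),(0:Fin d))) ((0:Fin d),(1:Fin d))
      rw [Matrix.conjTranspose_apply] at hherm
      have hb2 : ρ ((1:Fin d),(0:Fin d)) ((0:Fin d),(1:Fin d)) = b := hb 1 0 h10
      rw [hb2] at hherm
      have : star b = b := hherm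
      rw [Complex.star_def, Complex.conj_eq_iff_im] at this
      exact this
    have haR : a = (a.re : ℂ) := Complex.ext (by simp) (by simp [haim])
    have hbR : b = (b.re : ℂ) := Complex.ext (by simp) (by simp [hbim])
    -- real inequalities
    have hpR : 0 ≤ a.re + b.re := by
      rw [Complex.le_def] at hqp
      have := hqp.1
      simp [Complex.add_re, haim, hbim] at this
      linarith
    have hmR : 0 ≤ a.re - b.re := by
      rw [Complex.le_def] at hqm
      have := hqm.1
      simp [Complex.add_re, Complex.sub_re, haim, hbim] at this
      linarith
    -- real trace equation
    have hRtr : a.re * (d:ℝ)^2 + b.re * d = 1 := by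
      have := htr
      rw [haR, hbR] at this
      exact_mod_cast this
    have hapos : 0 < a.re := by
      rcases lt_or_eq_of_le hare with h | h
      · exact h
      · exfalso
        have hb0 : b.re = 0 := by linarith
        rw [← h] at hRtr
        norm_num [hb0] at hRtr
    refine ⟨b.re / a.re, ?_, ?_, ?_⟩
    · rw [le_div_iff₀ hapos]
      linarith
    · rw [div_le_one hapos]
      linarith
    · have hden : (d ^ 2 + d * (b.re / a.re) : ℝ) = (a.re)⁻¹ := by
        field_simp
        linarith [hRtr]
      have hden' : ((d ^ 2 + d * (b.re / a.re) : ℝ)⁻¹ : ℝ) = a.re := by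
        rw [hden, inv_inv]
      have hcoe : ((d ^ 2 + d * (b.re / a.re) : ℝ)⁻¹ : ℂ) = ((a.re : ℝ) : ℂ) := by
        simp only [hden]
        simp [Complex.ofReal_inv]
      have hane : ((a.re : ℝ) : ℂ) ≠ 0 := by exact_mod_cast hapos.ne'
      have hsc : ((a.re : ℝ) : ℂ) * ((b.re / a.re : ℝ) : ℂ) = ((b.re : ℝ) : ℂ) := by
        push_cast
        field_simp
      rw [hform, hcoe, smul_add, smul_smul, hsc, ← haR, ← hbR]
end
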